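/- arXiv:2308.02159 — 3 statements merged into one kernel-verified Lean document; each statement's English description precedes it below -/
import Mathlib

section
/- Under the hypotheses that f_n is non-negative, non-increasing on (0,∞), satisfies ∫_0^∞ f_n(y)² dy ≤ M uniformly, and ∫_0^{y₁} f_n^γ dy ≤ C for all n, the tail integral satisfies ∫_{y₁}^∞ f_n(y)^γ dy ≤ f_n(y₁)^{γ−2} M ≤ (C/y₁)^{(γ−2)/γ} M, so the tails converge to zero uniformly in n as y₁ → ∞. -/
open MeasureTheory Real Filter Topology

noncomputable section

/-- Tail estimate: for non-negative `f_n`, non-increasing on `(0,∞)`, with a uniform `L²`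
bound `∫_0^∞ f_n² ≤ M` and the uniform pointwise bound `f_n(y₁) ≤ (C/y₁)^{1/γ}`, the tails
satisfy `∫_{y₁}^∞ f_n^γ ≤ f_n(y₁)^{γ-2} M ≤ (C/y₁)^{(γ-2)/γ} M`; in particular they
converge to zero uniformly in `n` as `y₁ → ∞`. -/
theorem uniform_tail_estimate (γ M C : ℝ) (hγ : 2 < γ) (hM : 0 ≤ M) (hC : 0 < C)
    (f : ℕ → ℝ → ℝ)
    (hnn : ∀ n y, 0 ≤ f n y)
    (hmono : ∀ n, AntitoneOn (f n) (Set.Ioi (0 : ℝ)))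
    (hL2 : ∀ n, IntegrableOn (fun y => (f n y) ^ 2) (Set.Ioi (0 : ℝ)))
    (hL2bd : ∀ n, ∫ y in Set.Ioi (0 : ℝ), (f n y) ^ 2 ≤ M)
    (hintγ : ∀ n, ∀ y₁ : ℝ, 0 < y₁ → IntegrableOn (fun y => (f n y) ^ γ) (Set.Ioi y₁))
    (hbd : ∀ n, ∀ y₁ : ℝ, 0 < y₁ → f n y₁ ≤ (C / y₁) ^ (1 / γ)) :
    (∀ n, ∀ y₁ : ℝ, 0 < y₁ →
        (∫ y in Set.Ioi y₁, (f n y) ^ γ) ≤ (f n y₁) ^ (γ - 2) * M ∧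
        (∫ y in Set.Ioi y₁, (f n y) ^ γ) ≤ (C / y₁) ^ ((γ - 2) / γ) * M) ∧
    (∀ ε : ℝ, 0 < ε → ∃ Y : ℝ, 0 < Y ∧ ∀ y₁ : ℝ, Y ≤ y₁ → ∀ n,
        (∫ y in Set.Ioi y₁, (f n y) ^ γ) ≤ ε) := by
  have hγ0 : (0:ℝ) < γ := by linarith
  have hγ2 : (0:ℝ) ≤ γ - 2 := by linarith
  have key : ∀ n, ∀ y₁ : ℝ, 0 < y₁ →
      (∫ y in Set.Ioi y₁, (f n y) ^ γ) ≤ (f n y₁) ^ (γ - 2) * M ∧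
      (∫ y in Set.Ioi y₁, (f n y) ^ γ) ≤ (C / y₁) ^ ((γ - 2) / γ) * M := by
    intro n y₁ hy₁
    have hsub : Set.Ioi y₁ ⊆ Set.Ioi (0:ℝ) := fun y hy => lt_trans hy₁ hy
    have hint2 : IntegrableOn (fun y => (f n y) ^ 2) (Set.Ioi y₁) :=
      (hL2 n).mono_set hsub
    have hcnn : 0 ≤ (f n y₁) ^ (γ - 2) := Real.rpow_nonneg (hnn n y₁) _
    have step1 : (∫ y in Set.Ioi y₁, (f n y) ^ γ)
        ≤ ∫ y in Set.Ioi y₁, (f n y₁) ^ (γ - 2) * (f n y) ^ 2 := by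
      apply setIntegral_mono_on (hintγ n y₁ hy₁) (hint2.const_mul _) measurableSet_Ioi
      intro y hy
      have hy' : y₁ < y := hy
      have hy0 : 0 < y := lt_trans hy₁ hy'
      have hfle : f n y ≤ f n y₁ :=
        hmono n (Set.mem_Ioi.2 hy₁) (Set.mem_Ioi.2 hy0) (le_of_lt hy')
      rcases eq_or_lt_of_le (hnn n y) with h0 | h0
      · rw [← h0, Real.zero_rpow (ne_of_gt hγ0)]
        positivity
      · have hrw : (f n y) ^ γ = (f n y) ^ (γ - 2) * (f n y) ^ 2 := by
          rw [← Real.rpow_natCast (f n y) 2, ← Real.rpow_add h0]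
          norm_num
        rw [hrw]
        have hb : (f n y) ^ (γ - 2) ≤ (f n y₁) ^ (γ - 2) :=
          Real.rpow_le_rpow (hnn n y) hfle hγ2
        exact mul_le_mul_of_nonneg_right hb (by positivity)
    have step2 : (∫ y in Set.Ioi y₁, (f n y₁) ^ (γ - 2) * (f n y) ^ 2)
        = (f n y₁) ^ (γ - 2) * ∫ y in Set.Ioi y₁, (f n y) ^ 2 :=
      integral_const_mul _ _
    have step3 : (∫ y in Set.Ioi y₁, (f n y) ^ 2) ≤ ∫ y in Set.Ioi (0:ℝ), (f n y) ^ 2 := by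
      apply setIntegral_mono_set (hL2 n)
      · filter_upwards with y
        positivity
      · exact HasSubset.Subset.eventuallyLE hsub
    have h1 : (∫ y in Set.Ioi y₁, (f n y) ^ γ) ≤ (f n y₁) ^ (γ - 2) * M := by
      calc (∫ y in Set.Ioi y₁, (f n y) ^ γ)
          ≤ ∫ y in Set.Ioi y₁, (f n y₁) ^ (γ - 2) * (f n y) ^ 2 := step1
        _ = (f n y₁) ^ (γ - 2) * ∫ y in Set.Ioi y₁, (f n y) ^ 2 := step2
        _ ≤ (f n y₁) ^ (γ - 2) * M :=
            mul_le_mul_of_nonneg_left (le_trans step3 (hL2bd n)) hcnn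
    refine ⟨h1, le_trans h1 ?_⟩
    have hfb : (f n y₁) ^ (γ - 2) ≤ (C / y₁) ^ ((γ - 2) / γ) := by
      have h2 : (f n y₁) ^ (γ - 2) ≤ ((C / y₁) ^ (1 / γ)) ^ (γ - 2) :=
        Real.rpow_le_rpow (hnn n y₁) (hbd n y₁ hy₁) hγ2
      have h3 : ((C / y₁) ^ (1 / γ)) ^ (γ - 2) = (C / y₁) ^ ((γ - 2) / γ) := by
        rw [← Real.rpow_mul (le_of_lt (div_pos hC hy₁))]
        congr 1
        field_simp
      rw [h3] at h2
      exact h2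
    exact mul_le_mul_of_nonneg_right hfb hM
  refine ⟨key, ?_⟩
  intro ε hε
  have he : 0 < (γ - 2) / γ := div_pos (by linarith) hγ0
  have h1 : Tendsto (fun y₁ : ℝ => C / y₁) atTop (𝓝 0) :=
    Tendsto.div_atTop tendsto_const_nhds tendsto_id
  have h2 : Tendsto (fun y₁ : ℝ => (C / y₁) ^ ((γ - 2) / γ)) atTop (𝓝 0) := by
    have hc : ContinuousAt (fun x : ℝ => x ^ ((γ - 2) / γ)) 0 :=
      Real.continuousAt_rpow_const 0 _ (Or.inr he.le)
    have := hc.tendsto.comp h1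
    rwa [Real.zero_rpow (ne_of_gt he)] at this
  have hlim : Tendsto (fun y₁ : ℝ => (C / y₁) ^ ((γ - 2) / γ) * M) atTop (𝓝 0) := by
    simpa using h2.mul_const M
  have hev : ∀ᶠ y₁ in atTop, (C / y₁) ^ ((γ - 2) / γ) * M < ε :=
    hlim.eventually (gt_mem_nhds hε)
  rcases eventually_atTop.1 (hev.and (eventually_gt_atTop 0)) with ⟨Y, hY⟩
  refine ⟨Y, (hY Y le_rfl).2, fun y₁ hy₁ n => ?_⟩
  exact le_trans ((key n y₁ (hY y₁ hy₁).2).2) (le_of_lt (hY y₁ hy₁).1)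
end
end

section
/- Suppose f_n → f pointwise and uniformly on every compact interval of ℝ, each f_n is non-negative, even, non-increasing on (0,∞), ∫ f_n² ≤ M uniformly, and ∫ |λ| f_n^γ dy = |W|/Ω_{D−1} for all n. Then ∫ |λ| f^γ dy = |W|/Ω_{D−1}; i.e., the potential functional is preserved in the limit (no mass escapes to infinity). -/
open MeasureTheory Real Filter Topology Set

/-!
The `L²` bound and monotonicity give the pointwise decay `|y| f_n(y)² ≤ M`, hence
`f_n^γ ≤ C (1 + |y|)^{-γ/2}` off `[-1, 1]`, which is integrable because `γ > 2`. On `[-1, 1]`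
uniform convergence gives `f_n ≤ f_N + 2` for `n ≥ N`, so `f_n^γ` is dominated there by the
integrable `2^γ (f_N^γ + 2^γ)`. Dominated convergence then yields `∫ f_n^γ → ∫ g^γ`.
-/

theorem mul_sq_le_integral_sq_of_antitoneOn {φ : ℝ → ℝ} (hmono : AntitoneOn φ (Ioi 0))
    (hint : Integrable fun t => φ t ^ 2) {y : ℝ} (hy : 0 < y) (hφy : 0 ≤ φ y) :
    y * φ y ^ 2 ≤ ∫ t, φ t ^ 2 :=
  calc y * φ y ^ 2 = ∫ _ in Ioc 0 y, φ y ^ 2 := by simp [hy.le]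
    _ ≤ ∫ t in Ioc 0 y, φ t ^ 2 :=
      setIntegral_mono_on (integrableOn_const (by simp)) hint.integrableOn measurableSet_Ioc
        fun t ht => pow_le_pow_left₀ hφy (hmono ht.1 hy ht.2) 2
    _ ≤ ∫ t, φ t ^ 2 := setIntegral_le_integral hint (.of_forall fun _ => sq_nonneg _)

theorem abs_mul_sq_le_integral_sq_of_even_of_antitoneOn {φ : ℝ → ℝ}
    (heven : ∀ y, φ (-y) = φ y) (hmono : AntitoneOn φ (Ioi 0))
    (hint : Integrable fun t => φ t ^ 2) {y : ℝ} (hy : y ≠ 0) (hφy : 0 ≤ φ y) :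
    |y| * φ y ^ 2 ≤ ∫ t, φ t ^ 2 := by
  rcases hy.lt_or_gt with hneg | hpos
  · rw [abs_of_neg hneg, ← heven y]
    exact mul_sq_le_integral_sq_of_antitoneOn hmono hint (neg_pos.2 hneg) (by rwa [heven])
  · rw [abs_of_pos hpos]
    exact mul_sq_le_integral_sq_of_antitoneOn hmono hint hpos hφy

theorem rpow_le_of_mul_sq_le {x r M γ : ℝ} (hx : 0 ≤ x) (hr : 1 ≤ r) (hγ : 0 ≤ γ)
    (h : r * x ^ 2 ≤ M) : x ^ γ ≤ (2 * M) ^ (γ / 2) * (1 + r) ^ (-(γ / 2)) := by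
  have hsq : x ^ 2 ≤ 2 * M / (1 + r) := by
    rw [le_div_iff₀ (by linarith)]
    nlinarith [sq_nonneg x]
  calc x ^ γ = (x ^ 2) ^ (γ / 2) := by
        rw [← Real.rpow_natCast, ← Real.rpow_mul hx]; ring_nf
    _ ≤ (2 * M / (1 + r)) ^ (γ / 2) := by gcongr
    _ = (2 * M) ^ (γ / 2) * (1 + r) ^ (-(γ / 2)) := by
        rw [Real.div_rpow (by nlinarith [sq_nonneg x]) (by linarith),
          Real.rpow_neg (by linarith), div_eq_mul_inv]

theorem rpow_le_two_rpow_mul_add_rpow {x a b γ : ℝ} (hx : 0 ≤ x) (ha : 0 ≤ a) (hb : 0 ≤ b)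
    (hγ : 0 ≤ γ) (h : x ≤ a + b) : x ^ γ ≤ 2 ^ γ * (a ^ γ + b ^ γ) := by
  have hmax : max a b ^ γ ≤ a ^ γ + b ^ γ := by
    rcases le_total a b with hab | hab
    · rw [max_eq_right hab]; linarith [Real.rpow_nonneg ha γ]
    · rw [max_eq_left hab]; linarith [Real.rpow_nonneg hb γ]
  calc x ^ γ ≤ (2 * max a b) ^ γ := by
        gcongr; linarith [le_max_left a b, le_max_right a b]
    _ = 2 ^ γ * max a b ^ γ := Real.mul_rpow zero_le_two (ha.trans (le_max_left a b))
    _ ≤ 2 ^ γ * (a ^ γ + b ^ γ) := by gcongr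

theorem TendstoUniformlyOn.exists_forall_ge_le_add {ι α : Type*} [SemilatticeSup ι]
    [Nonempty ι] {F : ι → α → ℝ} {f : α → ℝ} {s : Set α} (h : TendstoUniformlyOn F f atTop s)
    {ε : ℝ} (hε : 0 < ε) : ∃ N, ∀ n ≥ N, ∀ y ∈ s, F n y ≤ F N y + 2 * ε := by
  obtain ⟨N, hN⟩ := eventually_atTop.1 (Metric.tendstoUniformlyOn_iff.1 h ε hε)
  refine ⟨N, fun n hn y hy => ?_⟩
  have h1 := hN n hn y hy
  have h2 := hN N le_rfl y hy
  rw [Real.dist_eq, abs_lt] at h1 h2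
  linarith

theorem tendsto_integral_rpow_of_even_of_antitoneOn {f : ℕ → ℝ → ℝ} {g : ℝ → ℝ} {γ M : ℝ}
    (hγ : 2 < γ) (hnn : ∀ n y, 0 ≤ f n y) (heven : ∀ n y, f n (-y) = f n y)
    (hmono : ∀ n, AntitoneOn (f n) (Ioi 0))
    (hconv_pt : ∀ y, Tendsto (fun n => f n y) atTop (𝓝 (g y)))
    (hconv_unif : TendstoUniformlyOn f g atTop (Icc (-1) 1))
    (hL2 : ∀ n, Integrable fun y => f n y ^ 2) (hL2bd : ∀ n, ∫ y, f n y ^ 2 ≤ M)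
    (hint : ∀ n, Integrable fun y => f n y ^ γ) :
    Tendsto (fun n => ∫ y, f n y ^ γ) atTop (𝓝 (∫ y, g y ^ γ)) := by
  have hγ0 : 0 ≤ γ := by linarith
  have hM : 0 ≤ M := (integral_nonneg fun t => sq_nonneg (f 0 t)).trans (hL2bd 0)
  obtain ⟨N, hlocal⟩ := hconv_unif.exists_forall_ge_le_add one_pos
  let bound : ℝ → ℝ := fun y =>
    (Icc (-1) 1).indicator (fun y => 2 ^ γ * (f N y ^ γ + 2 ^ γ)) y +
      (2 * M) ^ (γ / 2) * (1 + |y|) ^ (-(γ / 2))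
  refine tendsto_integral_filter_of_dominated_convergence bound
    (.of_forall fun n => (hint n).aestronglyMeasurable) ?_ ?_
    (.of_forall fun y => (hconv_pt y).rpow_const (.inr hγ0))
  · filter_upwards [eventually_ge_atTop N] with n hn
    refine .of_forall fun y => ?_
    rw [Real.norm_of_nonneg (Real.rpow_nonneg (hnn n y) γ)]
    by_cases hy : y ∈ Icc (-1) 1
    · have htail : 0 ≤ (2 * M) ^ (γ / 2) * (1 + |y|) ^ (-(γ / 2)) := by positivity
      have hclose := rpow_le_two_rpow_mul_add_rpow (hnn n y) (hnn N y) zero_le_two hγ0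
        (by simpa only [mul_one] using hlocal n hn y hy)
      simp only [bound, indicator_of_mem hy]
      linarith
    · have hy1 : 1 < |y| := lt_of_not_ge fun h => hy (abs_le.1 h)
      have hdecay := abs_mul_sq_le_integral_sq_of_even_of_antitoneOn (heven n) (hmono n) (hL2 n)
        (abs_pos.1 (by linarith)) (hnn n y)
      simp only [bound, indicator_of_notMem hy, zero_add]
      exact rpow_le_of_mul_sq_le (hnn n y) hy1.le hγ0 (hdecay.trans (hL2bd n))
  · refine (IntegrableOn.integrable_indicator ?_ measurableSet_Icc).add ?_
    · exact ((hint N).integrableOn.add (integrableOn_const (by simp))).const_mul _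
    · have := (integrable_one_add_norm (E := ℝ) (μ := volume) (r := γ / 2)
        (by simp; linarith)).const_mul ((2 * M) ^ (γ / 2))
      simpa only [Real.norm_eq_abs] using this

theorem potential_preserved_in_limit_general (D : ℕ) (hD : 2 < D) (lam W Ω M : ℝ)
    (hlam : lam < 0)
    (γ : ℝ) (hγ : γ = 2 * (D : ℝ) / ((D : ℝ) - 2))
    (f : ℕ → ℝ → ℝ) (g : ℝ → ℝ)
    (hnn : ∀ n y, 0 ≤ f n y)
    (heven : ∀ n y, f n (-y) = f n y)
    (hmono : ∀ n, AntitoneOn (f n) (Set.Ioi (0 : ℝ)))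
    (hconv_pt : ∀ y, Tendsto (fun n => f n y) atTop (nhds (g y)))
    (hconv_unif : ∀ K : Set ℝ, IsCompact K → TendstoUniformlyOn (fun n => f n) g atTop K)
    (hL2 : ∀ n, Integrable (fun y => (f n y) ^ 2))
    (hL2bd : ∀ n, ∫ y : ℝ, (f n y) ^ 2 ≤ M)
    (hγint : ∀ n, Integrable (fun y => |lam| * (f n y) ^ γ))
    (hfix : ∀ n, ∫ y : ℝ, |lam| * (f n y) ^ γ = |W| / Ω) :
    ∫ y : ℝ, |lam| * (g y) ^ γ = |W| / Ω := by
  have hγ2 : 2 < γ := by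
    have hD' : (2 : ℝ) < D := by exact_mod_cast hD
    rw [hγ, lt_div_iff₀ (by linarith)]
    linarith
  have hlam0 : |lam| ≠ 0 := abs_ne_zero.2 hlam.ne
  have hint : ∀ n, Integrable fun y => f n y ^ γ := fun n => by
    simpa [hlam0] using (hγint n).const_mul |lam|⁻¹
  have hlim := (tendsto_integral_rpow_of_even_of_antitoneOn hγ2 hnn heven hmono hconv_pt
    (hconv_unif _ isCompact_Icc) hL2 hL2bd hint).const_mul |lam|
  simp only [← integral_const_mul, hfix] at hlim
  exact (tendsto_const_nhds_iff.1 hlim).symm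

/-- No mass escapes to infinity: if `f_n → f` pointwise and uniformly on compacts, the `f_n`
are non-negative, even, non-increasing on `(0,∞)`, uniformly bounded in `L²`, and
`∫ |λ| f_n^γ = |W|/Ω_{D-1}` for all `n`, then `∫ |λ| f^γ = |W|/Ω_{D-1}`. -/
theorem potential_preserved_in_limit (D : ℕ) (hD : 2 < D) (lam W Ω M : ℝ)
    (hlam : lam < 0) (hW : W < 0) (hΩ : 0 < Ω) (hM : 0 ≤ M)
    (γ : ℝ) (hγ : γ = 2 * (D : ℝ) / ((D : ℝ) - 2))
    (f : ℕ → ℝ → ℝ) (g : ℝ → ℝ)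
    (hnn : ∀ n y, 0 ≤ f n y)
    (heven : ∀ n y, f n (-y) = f n y)
    (hmono : ∀ n, AntitoneOn (f n) (Set.Ioi (0 : ℝ)))
    (hconv_pt : ∀ y, Tendsto (fun n => f n y) atTop (nhds (g y)))
    (hconv_unif : ∀ K : Set ℝ, IsCompact K → TendstoUniformlyOn (fun n => f n) g atTop K)
    (hL2 : ∀ n, Integrable (fun y => (f n y) ^ 2))
    (hL2bd : ∀ n, ∫ y : ℝ, (f n y) ^ 2 ≤ M)
    (hγint : ∀ n, Integrable (fun y => |lam| * (f n y) ^ γ))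
    (hfix : ∀ n, ∫ y : ℝ, |lam| * (f n y) ^ γ = |W| / Ω) :
    ∫ y : ℝ, |lam| * (g y) ^ γ = |W| / Ω :=
  potential_preserved_in_limit_general D hD lam W Ω M hlam γ hγ f g hnn heven hmono hconv_pt
    hconv_unif hL2 hL2bd hγint hfix
end

section
/- For R ≫ L₊, the static potential V(R) = σ(R/L₊)^{D−1}√(1+R²/L₊²) − q(R/L₊)^D expressed in the canonical variable φ = L₊^{(4−D)/2}(2√σ/(D−2))R^{(D−2)/2} has the expansion V = ((D−2)²/8)(φ/L₊)² + λ_AdS φ^{2D/(D−2)} + subleading, where λ_AdS = −((D−2)/2)^{2D/(D−2)} σ^{−2/(D−2)} ((q−σ)/σ) L₊^{−2D/(D−2)}. -/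
open MeasureTheory Real Filter Topology

noncomputable section

/-- The static thin-wall potential `V(R) = σ(R/L₊)^{D−1}√(1+R²/L₊²) − q(R/L₊)^D`. -/
def staticPotential (D : ℕ) (σ q Lp R : ℝ) : ℝ :=
  σ * (R / Lp) ^ ((D : ℝ) - 1) * Real.sqrt (1 + R ^ 2 / Lp ^ 2) - q * (R / Lp) ^ (D : ℝ)

/-- The canonical field variable `φ = L₊^{(4−D)/2}(2√σ/(D−2)) R^{(D−2)/2}`. -/
def canonicalField (D : ℕ) (σ Lp R : ℝ) : ℝ :=
  Lp ^ ((4 - (D : ℝ)) / 2) * (2 * Real.sqrt σ / ((D : ℝ) - 2)) * R ^ (((D : ℝ) - 2) / 2)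

/-- `λ_AdS = −((D−2)/2)^{2D/(D−2)} σ^{−2/(D−2)} ((q−σ)/σ) L₊^{−2D/(D−2)}`. -/
def lambdaAdS (D : ℕ) (σ q Lp : ℝ) : ℝ :=
  -((((D : ℝ) - 2) / 2) ^ (2 * (D : ℝ) / ((D : ℝ) - 2))
      * σ ^ (-(2 : ℝ) / ((D : ℝ) - 2)) * ((q - σ) / σ)
      * Lp ^ (-(2 * (D : ℝ) / ((D : ℝ) - 2))))

/-!
Write `x = R/L₊`. Since `φ = L₊ (2√σ/(D−2)) x^{(D−2)/2}`, the two leading terms are exactly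
`σ x^{D−2}/2` and `(σ − q) x^D`, so the remainder is `σ x^{D−1} (√(1+x²) − x − 1/(2x))`.
The bracket is `−(√(1+x²) − x)²/(2x) = O(x^{−3})`, so the remainder is `O(x^{D−4})`.
-/

theorem abs_sqrt_one_add_sq_sub_le {x : ℝ} (hx : 0 < x) :
    |√(1 + x ^ 2) - (x + 1 / (2 * x))| ≤ 1 / (8 * x ^ 3) := by
  set s := √(1 + x ^ 2)
  have hs : s ^ 2 = 1 + x ^ 2 := sq_sqrt (by positivity)
  have hxs : x ≤ s := le_sqrt_of_sq_le (by linarith)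
  have hgap : (s - x) * (2 * x) ≤ 1 := by nlinarith
  have hexpand : x + 1 / (2 * x) - s = (s - x) ^ 2 / (2 * x) := by
    field_simp
    nlinarith
  rw [abs_sub_comm, abs_of_nonneg (by rw [hexpand]; positivity), hexpand,
    div_le_div_iff₀ (by positivity) (by positivity)]
  nlinarith [mul_le_mul hgap hgap (by nlinarith) zero_le_one]

theorem canonicalField_eq (D : ℕ) (σ : ℝ) {Lp R : ℝ} (hLp : 0 < Lp) (hR : 0 ≤ R) :
    canonicalField D σ Lp R = Lp * (2 * √σ / ((D : ℝ) - 2)) * (R / Lp) ^ (((D : ℝ) - 2) / 2) := by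
  rw [canonicalField, div_rpow hR hLp.le,
    show (4 - (D : ℝ)) / 2 = 1 - ((D : ℝ) - 2) / 2 by ring, rpow_sub hLp, rpow_one]
  have : 0 < Lp ^ (((D : ℝ) - 2) / 2) := by positivity
  field_simp

theorem canonicalField_div_sq (D : ℕ) (hD : (D : ℝ) ≠ 2) {σ Lp R : ℝ} (hσ : 0 ≤ σ) (hLp : 0 < Lp)
    (hR : 0 ≤ R) :
    (canonicalField D σ Lp R / Lp) ^ 2 = 4 * σ / ((D : ℝ) - 2) ^ 2 * (R / Lp) ^ ((D : ℝ) - 2) := by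
  have hD' : (D : ℝ) - 2 ≠ 0 := sub_ne_zero.mpr hD
  have hsq : ((R / Lp) ^ (((D : ℝ) - 2) / 2)) ^ 2 = (R / Lp) ^ ((D : ℝ) - 2) := by
    rw [← rpow_natCast, ← rpow_mul (by positivity)]
    norm_num
  rw [canonicalField_eq D σ hLp hR, div_pow, mul_pow, mul_pow, hsq, div_pow, mul_pow, sq_sqrt hσ]
  field_simp
  ring

theorem lambdaAdS_eq (D : ℕ) (hD : 2 < (D : ℝ)) {σ : ℝ} (q : ℝ) {Lp : ℝ} (hσ : 0 < σ) (hLp : 0 < Lp) :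
    lambdaAdS D σ q Lp
      = (σ - q) * (Lp * (2 * √σ / ((D : ℝ) - 2))) ^ (-(2 * (D : ℝ) / ((D : ℝ) - 2))) := by
  have hD' : 0 < (D : ℝ) - 2 := by linarith
  set γ := 2 * (D : ℝ) / ((D : ℝ) - 2) with hγ
  have hnum : (((D : ℝ) - 2) / 2) ^ γ = (2 / ((D : ℝ) - 2)) ^ (-γ) := by
    rw [rpow_neg (by positivity), ← inv_rpow (by positivity), inv_div]
  have hσpow : σ ^ (-(2 : ℝ) / ((D : ℝ) - 2)) = σ * √σ ^ (-γ) := by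
    rw [show -(2 : ℝ) / ((D : ℝ) - 2) = 1 + 1 / 2 * -γ by rw [hγ]; field_simp; ring, rpow_add hσ, rpow_one,
      rpow_mul hσ.le, ← sqrt_eq_rpow]
  rw [lambdaAdS, hnum, hσpow, show 2 * √σ / ((D : ℝ) - 2) = 2 / ((D : ℝ) - 2) * √σ by ring,
    mul_rpow hLp.le (by positivity), mul_rpow (by positivity) (by positivity)]
  field_simp
  ring

theorem lambdaAdS_mul_canonicalField_rpow (D : ℕ) (hD : 2 < (D : ℝ)) {σ : ℝ} (q : ℝ) {Lp R : ℝ}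
    (hσ : 0 < σ) (hLp : 0 < Lp) (hR : 0 ≤ R) :
    lambdaAdS D σ q Lp * canonicalField D σ Lp R ^ (2 * (D : ℝ) / ((D : ℝ) - 2))
      = (σ - q) * (R / Lp) ^ (D : ℝ) := by
  have hc : 0 < Lp * (2 * √σ / ((D : ℝ) - 2)) := by
    have : 0 < (D : ℝ) - 2 := by linarith
    positivity
  rw [lambdaAdS_eq D hD q hσ hLp, canonicalField_eq D σ hLp hR, mul_rpow hc.le (by positivity),
    ← rpow_mul (by positivity), mul_assoc, ← mul_assoc (_ ^ _), ← rpow_add hc, neg_add_cancel,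
    rpow_zero, one_mul]
  congr 2
  field_simp [show (D : ℝ) - 2 ≠ 0 by linarith]

theorem staticPotential_sub_leading_eq (D : ℕ) (hD : 2 < (D : ℝ)) {σ : ℝ} (q : ℝ) {Lp R : ℝ}
    (hσ : 0 < σ) (hLp : 0 < Lp) (hR : 0 < R) :
    staticPotential D σ q Lp R
        - ((D : ℝ) - 2) ^ 2 / 8 * (canonicalField D σ Lp R / Lp) ^ 2
        - lambdaAdS D σ q Lp * canonicalField D σ Lp R ^ (2 * (D : ℝ) / ((D : ℝ) - 2))
      = σ * (R / Lp) ^ ((D : ℝ) - 1)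
          * (√(1 + (R / Lp) ^ 2) - (R / Lp + 1 / (2 * (R / Lp)))) := by
  rw [staticPotential, canonicalField_div_sq D hD.ne' hσ.le hLp hR.le,
    lambdaAdS_mul_canonicalField_rpow D hD q hσ hLp hR.le, ← div_pow]
  set x := R / Lp
  have hx : 0 < x := by positivity
  have hxD : x ^ (D : ℝ) = x ^ ((D : ℝ) - 1) * x := by
    rw [← rpow_add_one hx.ne', sub_add_cancel]
  have hxD2 : x ^ ((D : ℝ) - 2) * x = x ^ ((D : ℝ) - 1) := by
    rw [← rpow_add_one hx.ne']
    ring_nf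
  have hD' : (D : ℝ) - 2 ≠ 0 := by linarith
  rw [hxD, ← hxD2]
  field_simp
  ring

theorem potential_expansion_general (D : ℕ) (hD : 2 < D) (σ q Lp : ℝ)
    (hσ : 0 < σ) (hLp : 0 < Lp) :
    ∃ C : ℝ, 0 < C ∧ ∃ R₀ : ℝ, 0 < R₀ ∧ ∀ R : ℝ, R₀ ≤ R →
      abs (staticPotential D σ q Lp R
          - ((D : ℝ) - 2) ^ 2 / 8 * (canonicalField D σ Lp R / Lp) ^ 2
          - lambdaAdS D σ q Lp * (canonicalField D σ Lp R) ^ (2 * (D : ℝ) / ((D : ℝ) - 2)))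
        ≤ C * (Lp ^ 2 / R ^ 2) * (R / Lp) ^ (D : ℝ) := by
  refine ⟨σ / 8, by positivity, Lp, hLp, fun R hR => ?_⟩
  have hR0 : 0 < R := hLp.trans_le hR
  rw [staticPotential_sub_leading_eq D (by exact_mod_cast hD) q hσ hLp hR0, abs_mul,
    abs_of_pos (by positivity), ← one_div_div (R ^ 2), ← div_pow]
  set x := R / Lp
  have hx : 1 ≤ x := (one_le_div hLp).mpr hR
  have hxD : x ^ ((D : ℝ) - 1) = x ^ (D : ℝ) / x := rpow_sub_one (by positivity) _
  calc _ ≤ σ * x ^ ((D : ℝ) - 1) * (1 / (8 * x ^ 3)) := by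
        gcongr
        exact abs_sqrt_one_add_sq_sub_le (by positivity)
    _ = σ / 8 * (1 / x ^ 2) * x ^ (D : ℝ) * (1 / x ^ 2) := by
        rw [hxD]
        field_simp
    _ ≤ σ / 8 * (1 / x ^ 2) * x ^ (D : ℝ) :=
        mul_le_of_le_one_right (by positivity) ((div_le_one (by positivity)).mpr (one_le_pow₀ hx))

/-- For `R ≫ L₊`, in the canonical variable `φ`, the static potential expands as
`V = ((D−2)²/8)(φ/L₊)² + λ_AdS φ^{2D/(D−2)} + subleading`, where the subleading terms are
suppressed by `L₊²/R²` relative to the leading scale `(R/L₊)^D`. -/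
theorem potential_expansion (D : ℕ) (hD : 2 < D) (σ q Lp : ℝ)
    (hσ : 0 < σ) (hqσ : σ < q) (hLp : 0 < Lp) :
    ∃ C : ℝ, 0 < C ∧ ∃ R₀ : ℝ, 0 < R₀ ∧ ∀ R : ℝ, R₀ ≤ R →
      abs (staticPotential D σ q Lp R
          - ((D : ℝ) - 2) ^ 2 / 8 * (canonicalField D σ Lp R / Lp) ^ 2
          - lambdaAdS D σ q Lp * (canonicalField D σ Lp R) ^ (2 * (D : ℝ) / ((D : ℝ) - 2)))
        ≤ C * (Lp ^ 2 / R ^ 2) * (R / Lp) ^ (D : ℝ) :=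
  potential_expansion_general D hD σ q Lp hσ hLp
end
end
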